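/- arXiv:2104.08822 — 10 statements merged into one kernel-verified Lean document; each statement's English description precedes it below -/
import Mathlib

section
/- Let K be a closed set in ℝⁿ and h : ℝⁿ → ℝ ∪ {+∞} a proper function with K ∩ dom h ≠ ∅ that is prox-convex on K with prox-convex value α > 0. Then for every z ∈ K the set prox_h(K, z) contains exactly one element, i.e. the map z ↦ prox_h(K, z) is single-valued on K. -/
open Set Filter RealInnerProductSpace

noncomputable section

/-- `proxSet h K z` is the set `prox_h(K, z) := argmin_{x ∈ K} [h(x) + (1/2)‖x − z‖²]`. -/
def proxSet {n : ℕ} (h : EuclideanSpace ℝ (Fin n) → EReal)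
    (K : Set (EuclideanSpace ℝ (Fin n))) (z : EuclideanSpace ℝ (Fin n)) :
    Set (EuclideanSpace ℝ (Fin n)) :=
  {x ∈ K | ∀ y ∈ K,
    h x + (((1/2 : ℝ) * ‖x - z‖ ^ 2 : ℝ) : EReal) ≤ h y + (((1/2 : ℝ) * ‖y - z‖ ^ 2 : ℝ) : EReal)}

/-- `h` is prox-convex on `K` with prox-convex value `α > 0` if for every `z ∈ K`
the set `prox_h(K, z)` is nonempty and every `x̄ ∈ prox_h(K, z)` satisfies
`h(x̄) − h(x) ≤ α⟨x̄ − z, x − x̄⟩` for all `x ∈ K`. -/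
def ProxConvexOn {n : ℕ} (h : EuclideanSpace ℝ (Fin n) → EReal)
    (K : Set (EuclideanSpace ℝ (Fin n))) (α : ℝ) : Prop :=
  ∀ z ∈ K, (proxSet h K z).Nonempty ∧
    ∀ xbar ∈ proxSet h K z, ∀ x ∈ K,
      h xbar - h x ≤ (((α * ⟪xbar - z, x - xbar⟫) : ℝ) : EReal)

/-- The proximity operator of a proper prox-convex function on a closed
set `K` is single-valued: for every `z ∈ K`, `prox_h(K, z)` has exactly one element. -/
theorem statement_2 {n : ℕ} (K : Set (EuclideanSpace ℝ (Fin n))) (hKcl : IsClosed K)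
    (h : EuclideanSpace ℝ (Fin n) → EReal)
    (hproper_dom : ∃ x, h x ≠ ⊤) (hproper_bot : ∀ x, h x ≠ ⊥)
    (hKdom : (K ∩ {x | h x ≠ ⊤}).Nonempty)
    (α : ℝ) (hα : 0 < α) (hpc : ProxConvexOn h K α) :
    ∀ z ∈ K, ∃! xbar, xbar ∈ proxSet h K z := by
  intro z hz
  obtain ⟨⟨xb, hxb⟩, hineq⟩ := hpc z hz
  refine ⟨xb, hxb, ?_⟩
  intro yb hyb
  -- both have finite h value
  obtain ⟨w, hwK, hw⟩ := hKdom
  have hfin : ∀ u, u ∈ proxSet h K z → h u ≠ ⊤ := by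
    intro u hu
    have hle := hu.2 w hwK
    intro htop
    rw [htop, EReal.top_add_of_ne_bot (EReal.coe_ne_bot _)] at hle
    have hlt : h w + (((1/2 : ℝ) * ‖w - z‖ ^ 2 : ℝ) : EReal) < ⊤ :=
      EReal.add_lt_top hw (EReal.coe_ne_top _)
    exact absurd (top_le_iff.1 hle) hlt.ne
  obtain ⟨a, ha⟩ : ∃ a : ℝ, h xb = (a : EReal) := by
    lift h xb to ℝ using ⟨hfin xb hxb, hproper_bot xb⟩ with a
    exact ⟨a, rfl⟩
  obtain ⟨b, hb⟩ : ∃ b : ℝ, h yb = (b : EReal) := by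
    lift h yb to ℝ using ⟨hfin yb hyb, hproper_bot yb⟩ with b
    exact ⟨b, rfl⟩
  have h1 := hineq xb hxb yb hyb.1
  have h2 := hineq yb hyb xb hxb.1
  rw [ha, hb] at h1 h2
  rw [← EReal.coe_sub] at h1 h2
  have h1' : a - b ≤ α * ⟪xb - z, yb - xb⟫ := EReal.coe_le_coe_iff.mp h1
  have h2' : b - a ≤ α * ⟪yb - z, xb - yb⟫ := EReal.coe_le_coe_iff.mp h2
  have hsum : 0 ≤ α * (⟪xb - z, yb - xb⟫ + ⟪yb - z, xb - yb⟫) := by nlinarith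
  have hkey : ⟪xb - z, yb - xb⟫ + ⟪yb - z, xb - yb⟫ = -‖yb - xb‖ ^ 2 := by
    have : ⟪yb - z, xb - yb⟫ = -⟪yb - z, yb - xb⟫ := by
      rw [← inner_neg_right]; congr 1; abel
    rw [this]
    have : ⟪xb - z, yb - xb⟫ - ⟪yb - z, yb - xb⟫ = ⟪xb - yb, yb - xb⟫ := by
      rw [← inner_sub_left]; congr 1; abel
    rw [sub_eq_add_neg] at this
    rw [this]
    have : (xb - yb) = -(yb - xb) := by abel
    rw [this, inner_neg_left, real_inner_self_eq_norm_sq]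
  rw [hkey] at hsum
  have : ‖yb - xb‖ ^ 2 ≤ 0 := by nlinarith
  have : yb - xb = 0 := by
    have := sq_nonneg ‖yb - xb‖
    have h0 : ‖yb - xb‖ ^ 2 = 0 := le_antisymm ‹‖yb - xb‖ ^ 2 ≤ 0› this
    simpa [pow_eq_zero_iff] using h0
  have : yb = xb := by
    have := sub_eq_zero.mp this; exact this
  exact this
end
end

section
/- Let K be a closed set in ℝⁿ and h : ℝⁿ → ℝ ∪ {+∞} a proper function with K ∩ dom h ≠ ∅ that is prox-convex on K with prox-convex value α > 0. Then the (single-valued) map z ↦ prox_h(K, z) is firmly nonexpansive on K: for all z₁, z₂ ∈ K, if x̄₁ ∈ prox_h(K, z₁) and x̄₂ ∈ prox_h(K, z₂), then ‖x̄₁ − x̄₂‖² ≤ ⟨z₁ − z₂, x̄₁ − x̄₂⟩. -/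
open Set Filter RealInnerProductSpace

noncomputable section

/-- An element of `proxSet` has finite `h`-value, given a point of `K ∩ dom h`. -/
lemma prox_ne_top {n : ℕ} {h : EuclideanSpace ℝ (Fin n) → EReal}
    {K : Set (EuclideanSpace ℝ (Fin n))} {z xbar w : EuclideanSpace ℝ (Fin n)}
    (hw : w ∈ K) (hwtop : h w ≠ ⊤) (hx : xbar ∈ proxSet h K z) : h xbar ≠ ⊤ := by
  intro htop
  have := hx.2 w hw
  rw [htop, EReal.top_add_of_ne_bot (EReal.coe_ne_bot _), top_le_iff] at this
  exact absurd this (EReal.add_lt_top hwtop (EReal.coe_ne_top _)).ne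

/-- The proximity operator of a proper prox-convex function on a closed
set `K` is firmly nonexpansive: for `z₁, z₂ ∈ K`, `x̄₁ ∈ prox_h(K, z₁)`,
`x̄₂ ∈ prox_h(K, z₂)` one has `‖x̄₁ − x̄₂‖² ≤ ⟨z₁ − z₂, x̄₁ − x̄₂⟩`. -/
theorem statement_3 {n : ℕ} (K : Set (EuclideanSpace ℝ (Fin n))) (hKcl : IsClosed K)
    (h : EuclideanSpace ℝ (Fin n) → EReal)
    (hproper_dom : ∃ x, h x ≠ ⊤) (hproper_bot : ∀ x, h x ≠ ⊥)
    (hKdom : (K ∩ {x | h x ≠ ⊤}).Nonempty)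
    (α : ℝ) (hα : 0 < α) (hpc : ProxConvexOn h K α) :
    ∀ z₁ ∈ K, ∀ z₂ ∈ K, ∀ xbar₁ ∈ proxSet h K z₁, ∀ xbar₂ ∈ proxSet h K z₂,
      ‖xbar₁ - xbar₂‖ ^ 2 ≤ ⟪z₁ - z₂, xbar₁ - xbar₂⟫ := by
  intro z₁ hz₁ z₂ hz₂ xbar₁ hx₁ xbar₂ hx₂
  obtain ⟨w, hwK, hwtop⟩ := hKdom
  have h1top : h xbar₁ ≠ ⊤ := prox_ne_top hwK hwtop hx₁
  have h2top : h xbar₂ ≠ ⊤ := prox_ne_top hwK hwtop hx₂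
  obtain ⟨a, ha⟩ : ∃ a : ℝ, h xbar₁ = (a : EReal) :=
    ⟨(h xbar₁).toReal, (EReal.coe_toReal h1top (hproper_bot _)).symm⟩
  obtain ⟨b, hb⟩ : ∃ b : ℝ, h xbar₂ = (b : EReal) :=
    ⟨(h xbar₂).toReal, (EReal.coe_toReal h2top (hproper_bot _)).symm⟩
  have k1K : xbar₁ ∈ K := hx₁.1
  have k2K : xbar₂ ∈ K := hx₂.1
  have e1 := (hpc z₁ hz₁).2 xbar₁ hx₁ xbar₂ k2K
  have e2 := (hpc z₂ hz₂).2 xbar₂ hx₂ xbar₁ k1K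
  rw [ha, hb, ← EReal.coe_sub, EReal.coe_le_coe_iff] at e1 e2
  have key : 0 ≤ ⟪xbar₁ - z₁, xbar₂ - xbar₁⟫ + ⟪xbar₂ - z₂, xbar₁ - xbar₂⟫ := by
    have := add_le_add e1 e2
    nlinarith [this]
  have expand : ⟪xbar₁ - z₁, xbar₂ - xbar₁⟫ + ⟪xbar₂ - z₂, xbar₁ - xbar₂⟫
      = ⟪z₁ - z₂, xbar₁ - xbar₂⟫ - ⟪xbar₁ - xbar₂, xbar₁ - xbar₂⟫ := by
    have h0 : xbar₂ - xbar₁ = -(xbar₁ - xbar₂) := by abel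
    rw [h0, inner_neg_right, ← inner_sub_left,
      show -⟪xbar₁ - z₁, xbar₁ - xbar₂⟫ + ⟪xbar₂ - z₂, xbar₁ - xbar₂⟫
        = ⟪(xbar₂ - z₂) - (xbar₁ - z₁), xbar₁ - xbar₂⟫ by simp only [inner_sub_left]; ring]
    congr 1
    abel
  rw [expand] at key
  rw [← real_inner_self_eq_norm_sq]
  linarith
end
end

section
/- Let K = [0,1] and h : ℝ → ℝ, h(x) = −x² − x. Then for every z ∈ [0,1], the set argmin_{x ∈ [0,1]} [h(x) + (1/2)(x − z)²] equals {1}, and h is prox-convex on [0,1] with prox-convex value 1: h(1) − h(x) ≤ (1 − z)(x − 1) for all x, z ∈ [0,1]. -/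
open Set

/-- For `h(x) = −x² − x` on `K = [0,1]`: for every `z ∈ [0,1]` the set
`argmin_{x ∈ [0,1]} [h(x) + (1/2)(x − z)²]` equals `{1}`, and `h` is prox-convex on
`[0,1]` with prox-convex value `1`: `h(1) − h(x) ≤ (1 − z)(x − 1)` for all `x, z ∈ [0,1]`. -/
theorem statement_6 :
    (∀ z ∈ Icc (0:ℝ) 1,
      {x ∈ Icc (0:ℝ) 1 | ∀ y ∈ Icc (0:ℝ) 1,
        (-x ^ 2 - x) + (1/2) * (x - z) ^ 2 ≤ (-y ^ 2 - y) + (1/2) * (y - z) ^ 2} = {1}) ∧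
    (∀ z ∈ Icc (0:ℝ) 1, ∀ x ∈ Icc (0:ℝ) 1,
      (-(1:ℝ) ^ 2 - 1) - (-x ^ 2 - x) ≤ (1 - z) * (x - 1)) := by
  constructor
  · intro z hz
    ext x
    simp only [mem_setOf_eq, mem_singleton_iff, mem_Icc] at *
    constructor
    · rintro ⟨⟨hx0, hx1⟩, hmin⟩
      have h1 := hmin 1 ⟨by norm_num, le_refl 1⟩
      nlinarith [hz.1, hz.2]
    · rintro rfl
      refine ⟨⟨by norm_num, le_refl 1⟩, fun y hy => ?_⟩
      nlinarith [hy.1, hy.2, hz.1, hz.2]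
  · intro z hz x hx
    nlinarith [hx.1, hx.2, hz.1, hz.2]
end

section
/- Let n ≥ 3, K = [1, n], and h : K → ℝ defined by h(x) = 1 − x³ for 1 ≤ x ≤ 2 and h(x) = 1 − x³ − k for k < x ≤ k + 1, k ∈ {2, …, n−1}. Then for every z ∈ [1, n], the set argmin_{x ∈ [1,n]} [h(x) + (1/2)(x − z)²] equals {n}. -/
open Set

/-- Let `n ≥ 3`, `K = [1, n]` and `h` be given by `h(x) = 1 − x³` for
`1 ≤ x ≤ 2` and `h(x) = 1 − x³ − k` for `k < x ≤ k + 1`, `k ∈ {2, …, n−1}`. Then for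
every `z ∈ [1, n]`, `argmin_{x ∈ [1,n]} [h(x) + (1/2)(x − z)²] = {n}`. -/
theorem statement_8 (n : ℕ) (hn : 3 ≤ n) (h : ℝ → ℝ)
    (hbranch1 : ∀ x : ℝ, 1 ≤ x → x ≤ 2 → h x = 1 - x ^ 3)
    (hbranch2 : ∀ k : ℕ, 2 ≤ k → k ≤ n - 1 →
      ∀ x : ℝ, (k : ℝ) < x → x ≤ (k : ℝ) + 1 → h x = 1 - x ^ 3 - (k : ℝ)) :
    ∀ z ∈ Icc (1:ℝ) (n:ℝ),
      {x ∈ Icc (1:ℝ) (n:ℝ) | ∀ y ∈ Icc (1:ℝ) (n:ℝ),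
        h x + (1/2) * (x - z) ^ 2 ≤ h y + (1/2) * (y - z) ^ 2} = {(n:ℝ)} := by
  -- key representation of h
  have key : ∀ x : ℝ, 1 ≤ x → x ≤ (n:ℝ) → ∃ c : ℕ,
      h x = 1 - x ^ 3 - (c:ℝ) ∧ (c:ℝ) < x ∧ (x ≤ 2 → c = 0) ∧ (2 < x → x ≤ (c:ℝ) + 1) := by
    intro x hx1 hxn
    by_cases hx2 : x ≤ 2
    · refine ⟨0, ?_, ?_, fun _ => rfl, fun hc => absurd hx2 (not_le.mpr hc)⟩
      · simp [hbranch1 x hx1 hx2]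
      · push_cast; linarith
    · push_neg at hx2
      have hx0 : (0:ℝ) ≤ x := by linarith
      set m : ℕ := ⌈x⌉₊ with hm
      have hmx : x ≤ (m:ℝ) := Nat.le_ceil x
      have hxm : (m:ℝ) < x + 1 := Nat.ceil_lt_add_one hx0
      have hm3 : 3 ≤ m := by
        have : (2:ℝ) < (m:ℝ) := lt_of_lt_of_le hx2 hmx
        have : 2 < m := by exact_mod_cast this
        omega
      refine ⟨m - 1, ?_, ?_, ?_, ?_⟩
      · have hk2 : 2 ≤ m - 1 := by omega
        have hkn : m - 1 ≤ n - 1 := by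
          have h1 : (m:ℝ) < (n:ℝ) + 1 := by linarith
          have : m < n + 1 := by exact_mod_cast h1
          omega
        have hcast : ((m - 1 : ℕ) : ℝ) = (m:ℝ) - 1 := by
          have : 1 ≤ m := by omega
          push_cast [this]; ring
        rw [hbranch2 (m-1) hk2 hkn x (by rw [hcast]; linarith) (by rw [hcast]; linarith)]
      · have hcast : ((m - 1 : ℕ) : ℝ) = (m:ℝ) - 1 := by
          have : 1 ≤ m := by omega
          push_cast [this]; ring
        rw [hcast]; linarith
      · intro hc; linarith
      · intro _
        have hcast : ((m - 1 : ℕ) : ℝ) = (m:ℝ) - 1 := by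
          have : 1 ≤ m := by omega
          push_cast [this]; ring
        rw [hcast]; linarith
  intro z hz
  obtain ⟨hz1, hzn⟩ := hz
  have hn3 : (3:ℝ) ≤ (n:ℝ) := by exact_mod_cast hn
  -- strict decrease
  have dec : ∀ x y : ℝ, 1 ≤ x → x < y → y ≤ (n:ℝ) →
      h y + (1/2) * (y - z) ^ 2 < h x + (1/2) * (x - z) ^ 2 := by
    intro x y hx1 hxy hyn
    obtain ⟨cx, hhx, hcxlt, hcx2, hcx2'⟩ := key x hx1 (by linarith)
    obtain ⟨cy, hhy, hcylt, hcy2, hcy2'⟩ := key y (by linarith) hyn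
    have hcc : (cx:ℝ) ≤ (cy:ℝ) := by
      by_cases hy2 : y ≤ 2
      · have := hcx2 (by linarith)
        have := hcy2 hy2
        simp_all
      · push_neg at hy2
        by_cases hx2 : x ≤ 2
        · rw [hcx2 hx2]
          push_cast
          positivity
        · push_neg at hx2
          have h1 := hcy2' hy2
          have : (cx:ℝ) < (cy:ℝ) + 1 := by linarith
          have : cx < cy + 1 := by exact_mod_cast this
          exact_mod_cast Nat.lt_succ_iff.mp this
    rw [hhx, hhy]
    have h1 : 0 < y - x := sub_pos.mpr hxy
    have h2 : 0 < x^2 + x*y + y^2 - (x+y)/2 + z := by nlinarith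
    nlinarith [mul_pos h1 h2, hcc]
  ext x
  simp only [mem_setOf_eq, mem_singleton_iff, mem_Icc]
  constructor
  · rintro ⟨⟨hx1, hxn⟩, hmin⟩
    by_contra hne
    have hlt : x < (n:ℝ) := lt_of_le_of_ne hxn hne
    have := hmin (n:ℝ) ⟨by linarith, le_refl _⟩
    have := dec x (n:ℝ) hx1 hlt (le_refl _)
    linarith
  · rintro rfl
    refine ⟨⟨by linarith, le_refl _⟩, ?_⟩
    rintro y ⟨hy1, hyn⟩
    rcases lt_or_eq_of_le hyn with hlt | heq
    · exact le_of_lt (dec y (n:ℝ) hy1 hlt (le_refl _))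
    · rw [heq]
end

section
/- Let K be a closed set in ℝⁿ and h : ℝⁿ → ℝ ∪ {+∞} a proper lower semicontinuous function with K ∩ dom h ≠ ∅ that is prox-convex on K with prox-convex value α > 0, and let e(z) := min_{x ∈ K} [h(x) + (α/2)‖z − x‖²] denote its Moreau envelope of parameter 1/α and p(z) the unique element of prox_h(K, z). Then for all x, y ∈ K: 0 ≤ e(y) − e(x) − α⟨y − x, x − p(x)⟩ ≤ α‖y − x‖²; in particular e is Fréchet differentiable at every x ∈ K with gradient ∇e(x) = α(x − p(x)), and this gradient map is α-Lipschitz continuous on K. -/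
open Set Filter RealInnerProductSpace

noncomputable section

private lemma calc1 {n : ℕ} (α : ℝ) (u v : EuclideanSpace ℝ (Fin n)) :
    α * ⟪u, u - v⟫ + α/2 * ‖v‖^2 = α/2 * ‖u‖^2 + α/2 * ‖u - v‖^2 := by
  rw [inner_sub_right, real_inner_self_eq_norm_sq, norm_sub_sq_real]
  ring

private lemma calc2 {n : ℕ} (α : ℝ) (a q y w : EuclideanSpace ℝ (Fin n)) (b r : ℝ)
    (hbr : b - r ≤ α * ⟪q - a, w - q⟫) :
    (b + α/2 * ‖a - q‖^2) + α * ⟪y - a, a - q⟫ + α/2 * ‖(a - q) - (y - w)‖^2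
      ≤ r + α/2 * ‖y - w‖^2 := by
  have e1 : q - a = -(a - q) := by abel
  have e2 : w - q = ((a - q) - (y - w)) + (y - a) := by abel
  rw [e1, e2, inner_neg_left, inner_add_right] at hbr
  have h1 := calc1 α (a - q) (y - w)
  have h3 : ⟪y - a, a - q⟫ = ⟪a - q, y - a⟫ := real_inner_comm _ _
  rw [h3]
  linarith [hbr, h1]

private lemma calc3 {n : ℕ} (α : ℝ) (a q y : EuclideanSpace ℝ (Fin n)) (b : ℝ) :
    b + α/2 * ‖y - q‖^2
      = (b + α/2 * ‖a - q‖^2) + α * ⟪y - a, a - q⟫ + α/2 * ‖y - a‖^2 := by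
  have e1 : y - q = (y - a) + (a - q) := by abel
  rw [e1, norm_add_sq_real]
  ring

/-- For a proper lsc prox-convex `h` on `K` with prox-convex value
`α > 0`, the Moreau envelope `e(z) = min_{x ∈ K} [h(x) + (α/2)‖z − x‖²]` (of parameter
`1/α`) satisfies, with `p(z)` the unique element of `prox_h(K, z)`:
`0 ≤ e(y) − e(x) − α⟨y − x, x − p(x)⟩ ≤ α‖y − x‖²` for all `x, y ∈ K`; in particular
`e` is Fréchet differentiable at every `x ∈ K` with `∇e(x) = α(x − p(x))`, and this
gradient map is `α`-Lipschitz on `K`. -/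
theorem statement_10 {n : ℕ} (K : Set (EuclideanSpace ℝ (Fin n))) (hKcl : IsClosed K)
    (h : EuclideanSpace ℝ (Fin n) → EReal)
    (hproper_dom : ∃ x, h x ≠ ⊤) (hproper_bot : ∀ x, h x ≠ ⊥)
    (hlsc : LowerSemicontinuous h)
    (hKdom : (K ∩ {x | h x ≠ ⊤}).Nonempty)
    (α : ℝ) (hα : 0 < α) (hpc : ProxConvexOn h K α)
    (p : EuclideanSpace ℝ (Fin n) → EuclideanSpace ℝ (Fin n))
    (hp : ∀ z ∈ K, proxSet h K z = {p z})
    (e : EuclideanSpace ℝ (Fin n) → ℝ)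
    (he : ∀ z, (e z : EReal) = ⨅ x ∈ K, (h x + (((α/2 : ℝ) * ‖z - x‖ ^ 2 : ℝ) : EReal))) :
    (∀ x ∈ K, ∀ y ∈ K,
      0 ≤ e y - e x - α * ⟪y - x, x - p x⟫ ∧
      e y - e x - α * ⟪y - x, x - p x⟫ ≤ α * ‖y - x‖ ^ 2) ∧
    (∀ x ∈ K, HasGradientAt e (α • (x - p x)) x) ∧
    LipschitzOnWith (Real.toNNReal α) (fun x => α • (x - p x)) K := by
  obtain ⟨x₀, hx₀K, hx₀dom⟩ := hKdom
  have hpmem : ∀ x ∈ K, p x ∈ proxSet h K x := by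
    intro x hx; rw [hp x hx]; exact rfl
  have hpK : ∀ x ∈ K, p x ∈ K := fun x hx => (hpmem x hx).1
  have hineq : ∀ x ∈ K, ∀ w ∈ K,
      h (p x) - h w ≤ (((α * ⟪p x - x, w - p x⟫ : ℝ)) : EReal) :=
    fun x hx w hw => (hpc x hx).2 (p x) (hpmem x hx) w hw
  -- finiteness of h (p x)
  have hfin : ∀ x ∈ K, ∃ b : ℝ, h (p x) = (b : EReal) := by
    intro x hx
    have h1 := hineq x hx x₀ hx₀K
    have hne_top : h (p x) ≠ ⊤ := by
      intro htop
      rw [htop, ← EReal.coe_toReal hx₀dom (hproper_bot x₀), EReal.top_sub_coe] at h1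
      exact (EReal.coe_ne_top _) (top_le_iff.1 h1)
    exact ⟨(h (p x)).toReal, (EReal.coe_toReal hne_top (hproper_bot _)).symm⟩
  -- real form of the prox-convex inequality
  have hreal : ∀ x ∈ K, ∀ w ∈ K, ∀ b r : ℝ, h (p x) = (b : EReal) → h w = (r : EReal) →
      b - r ≤ α * ⟪p x - x, w - p x⟫ := by
    intro x hx w hw b r hb hr
    have h2 := hineq x hx w hw
    rw [hb, hr, ← EReal.coe_sub] at h2
    exact_mod_cast h2
  -- the envelope value at points of K
  have henv : ∀ x ∈ K, ∀ b : ℝ, h (p x) = (b : EReal) →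
      e x = b + α/2 * ‖x - p x‖^2 := by
    intro x hx b hb
    have key : (⨅ w ∈ K, (h w + (((α/2 : ℝ) * ‖x - w‖ ^ 2 : ℝ) : EReal)))
        = (((b + α/2 * ‖x - p x‖^2 : ℝ)) : EReal) := by
      apply le_antisymm
      · have h1 := iInf₂_le (f := fun w (_ : w ∈ K) =>
          (h w + (((α/2 : ℝ) * ‖x - w‖ ^ 2 : ℝ) : EReal))) (p x) (hpK x hx)
        rw [hb, ← EReal.coe_add] at h1
        exact h1
      · refine le_iInf₂ fun w hw => ?_
        by_cases hwt : h w = ⊤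
        · rw [hwt, EReal.top_add_coe]; exact le_top
        · have hwr : h w = ((h w).toReal : EReal) :=
            (EReal.coe_toReal hwt (hproper_bot w)).symm
          have h2 := hreal x hx w hw b _ hb hwr
          rw [hwr, ← EReal.coe_add, EReal.coe_le_coe_iff]
          have h3 := calc2 α x (p x) x w b _ h2
          simp only [sub_self, inner_zero_left, mul_zero, add_zero] at h3
          have h4 : 0 ≤ α/2 * ‖(x - p x) - (x - w)‖^2 := by positivity
          linarith
    have := (he x).trans key
    exact_mod_cast this
  -- lower bound, valid for all y
  have hlower : ∀ x ∈ K, ∀ y, e x + α * ⟪y - x, x - p x⟫ ≤ e y := by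
    intro x hx y
    obtain ⟨b, hb⟩ := hfin x hx
    have hex := henv x hx b hb
    have key : (((e x + α * ⟪y - x, x - p x⟫ : ℝ)) : EReal) ≤ (e y : EReal) := by
      rw [he y]
      refine le_iInf₂ fun w hw => ?_
      by_cases hwt : h w = ⊤
      · rw [hwt, EReal.top_add_coe]; exact le_top
      · have hwr : h w = ((h w).toReal : EReal) :=
          (EReal.coe_toReal hwt (hproper_bot w)).symm
        have h2 := hreal x hx w hw b _ hb hwr
        rw [hwr, ← EReal.coe_add, EReal.coe_le_coe_iff]
        have h3 := calc2 α x (p x) y w b _ h2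
        have h4 : 0 ≤ α/2 * ‖(x - p x) - (y - w)‖^2 := by positivity
        linarith
    exact_mod_cast key
  -- strong lower bound on K
  have hstrong : ∀ x ∈ K, ∀ y ∈ K,
      e x + α * ⟪y - x, x - p x⟫ + α/2 * ‖(x - p x) - (y - p y)‖^2 ≤ e y := by
    intro x hx y hy
    obtain ⟨b, hb⟩ := hfin x hx
    obtain ⟨r, hr⟩ := hfin y hy
    have hex := henv x hx b hb
    have hey := henv y hy r hr
    have h2 := hreal x hx (p y) (hpK y hy) b r hb hr
    have h3 := calc2 α x (p x) y (p y) b r h2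
    linarith
  -- upper bound, valid for all y
  have hupper : ∀ x ∈ K, ∀ y,
      e y ≤ e x + α * ⟪y - x, x - p x⟫ + α/2 * ‖y - x‖^2 := by
    intro x hx y
    obtain ⟨b, hb⟩ := hfin x hx
    have hex := henv x hx b hb
    have h1 : (e y : EReal) ≤ (((b + α/2 * ‖y - p x‖^2 : ℝ)) : EReal) := by
      rw [he y]
      have h1 := iInf₂_le (f := fun w (_ : w ∈ K) =>
        (h w + (((α/2 : ℝ) * ‖y - w‖ ^ 2 : ℝ) : EReal))) (p x) (hpK x hx)
      rw [hb, ← EReal.coe_add] at h1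
      exact h1
    have h1' : e y ≤ b + α/2 * ‖y - p x‖^2 := by exact_mod_cast h1
    have h2 := calc3 α x (p x) y b
    linarith
  refine ⟨?_, ?_, ?_⟩
  · intro x hx y hy
    constructor
    · linarith [hlower x hx y]
    · have := hupper x hx y
      nlinarith [sq_nonneg ‖y - x‖]
  · intro x hx
    rw [hasGradientAt_iff_isLittleO, Asymptotics.isLittleO_iff]
    intro c hc
    have hδ : 0 < 2 * c / α := by positivity
    filter_upwards [Metric.ball_mem_nhds x hδ] with y hy
    have hdist : ‖y - x‖ < 2 * c / α := by
      rw [← dist_eq_norm]; exact hy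
    have hinner : ⟪α • (x - p x), y - x⟫ = α * ⟪y - x, x - p x⟫ := by
      rw [real_inner_smul_left, real_inner_comm]
    rw [hinner]
    have h1 := hlower x hx y
    have h2 := hupper x hx y
    have habs : ‖e y - e x - α * ⟪y - x, x - p x⟫‖ = e y - e x - α * ⟪y - x, x - p x⟫ := by
      rw [Real.norm_eq_abs, abs_of_nonneg]; linarith
    rw [habs]
    have hn : 0 ≤ ‖y - x‖ := norm_nonneg _
    have h5 : α * ‖y - x‖ ≤ 2 * c := by
      rw [lt_div_iff₀ hα] at hdist
      nlinarith
    nlinarith [mul_le_mul_of_nonneg_right h5 hn]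
  · rw [lipschitzOnWith_iff_dist_le_mul]
    intro x hx y hy
    have h1 := hstrong x hx y hy
    have h2 := hstrong y hy x hx
    set u := x - p x
    set v := y - p y
    have e1 : v - u = -(u - v) := (neg_sub u v).symm
    have e2 : x - y = -(y - x) := (neg_sub y x).symm
    rw [e1, e2, inner_neg_left, norm_neg] at h2
    -- h1 : e x + α⟪y-x,u⟫ + α/2‖u-v‖² ≤ e y ; h2 : e y + α⟪y-x,v⟫ + α/2‖u-v‖² ≤ e x
    have hsum : α * ‖u - v‖^2 ≤ α * ⟪y - x, v - u⟫ := by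
      rw [inner_sub_right]; nlinarith
    have hs2 : ‖u - v‖^2 ≤ ⟪y - x, v - u⟫ :=
      le_of_mul_le_mul_left (by linarith) hα
    have hcs : ⟪y - x, v - u⟫ ≤ ‖y - x‖ * ‖v - u‖ := real_inner_le_norm _ _
    have hnorm : ‖u - v‖ ≤ ‖y - x‖ := by
      rcases eq_or_lt_of_le (norm_nonneg (u - v)) with h0 | h0
      · rw [← h0]; exact norm_nonneg _
      · have : ‖v - u‖ = ‖u - v‖ := norm_sub_rev _ _
        rw [this] at hcs
        nlinarith
    have hdist : dist (α • u) (α • v) = α * ‖u - v‖ := by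
      rw [dist_eq_norm, ← smul_sub, norm_smul, Real.norm_eq_abs, abs_of_pos hα]
    rw [hdist, Real.coe_toNNReal α hα.le, dist_eq_norm]
    have : ‖x - y‖ = ‖y - x‖ := norm_sub_rev _ _
    rw [this]
    exact mul_le_mul_of_nonneg_left hnorm hα.le
end
end

section
/- Let K be a closed convex set in ℝⁿ and h : ℝⁿ → ℝ ∪ {+∞} a proper lower semicontinuous function with K ∩ dom h ≠ ∅ that is strongly G-subdifferentiable on K. Then h is prox-convex on K with prox-convex value α = 1/2: for every z ∈ K, prox_h(K, z) = {x̄} and h(x̄) − h(x) ≤ (1/2)⟨x̄ − z, x − x̄⟩ for all x ∈ K. -/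
open Set Filter RealInnerProductSpace

noncomputable section

open scoped Classical in
/-- Indicator function of a set: `0` on `K`, `+∞` outside. -/
def indicatorE {n : ℕ} (K : Set (EuclideanSpace ℝ (Fin n))) (x : EuclideanSpace ℝ (Fin n)) :
    EReal :=
  if x ∈ K then 0 else ⊤

/-- Gutiérrez subdifferential of `g` at `x`:
`∂^≤ g(x) = {ξ : g(y) ≥ g(x) + ⟨ξ, y − x⟩ for all y with g(y) ≤ g(x)}`. -/
def gutierrezSubdiff {n : ℕ} (g : EuclideanSpace ℝ (Fin n) → EReal)
    (x : EuclideanSpace ℝ (Fin n)) : Set (EuclideanSpace ℝ (Fin n)) :=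
  {ξ | ∀ y, g y ≤ g x → g x + ((⟪ξ, y - x⟫ : ℝ) : EReal) ≤ g y}

/-- A proper, lower semicontinuous, strongly G-subdifferentiable
function on a closed convex set `K` (i.e. strongly quasiconvex on `K` with some modulus
`β ≥ 1`, with `prox_h(K, ·)` single-valued and `(1/2)(z − x̄) ∈ ∂^≤_K h(x̄)` whenever
`prox_h(K, z) = {x̄}`) is prox-convex on `K` with prox-convex value `α = 1/2`. -/
theorem statement_11 {n : ℕ} (K : Set (EuclideanSpace ℝ (Fin n)))
    (hKcl : IsClosed K) (hKcv : Convex ℝ K)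
    (h : EuclideanSpace ℝ (Fin n) → EReal)
    (hproper_dom : ∃ x, h x ≠ ⊤) (hproper_bot : ∀ x, h x ≠ ⊥)
    (hlsc : LowerSemicontinuous h)
    (hKdom : (K ∩ {x | h x ≠ ⊤}).Nonempty)
    (β : ℝ) (hβ : 1 ≤ β)
    (hsqc : ∀ x ∈ K ∩ {x | h x ≠ ⊤}, ∀ y ∈ K ∩ {x | h x ≠ ⊤}, ∀ l ∈ Icc (0:ℝ) 1,
      h (l • y + (1 - l) • x) ≤
        max (h x) (h y) - ((l * (1 - l) * (β/2) * ‖x - y‖ ^ 2 : ℝ) : EReal))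
    (hGsub : ∀ z ∈ K, ∃ xbar, proxSet h K z = {xbar} ∧
      (1/2 : ℝ) • (z - xbar) ∈ gutierrezSubdiff (fun y => h y + indicatorE K y) xbar) :
    ∀ z ∈ K, (proxSet h K z).Nonempty ∧
      ∀ xbar ∈ proxSet h K z, ∀ x ∈ K,
        h xbar - h x ≤ (((1/2 : ℝ) * ⟪xbar - z, x - xbar⟫ : ℝ) : EReal) := by
  intro z hz
  obtain ⟨x0, hx0eq, hx0sub⟩ := hGsub z hz
  refine ⟨by rw [hx0eq]; exact ⟨x0, rfl⟩, ?_⟩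
  intro xbar hxbar x hx
  have hxbar_prox : xbar ∈ proxSet h K z := hxbar
  obtain ⟨hxbarK, hprox⟩ := hxbar_prox
  have hxbar0 : xbar = x0 := by rw [hx0eq] at hxbar; exact hxbar
  subst hxbar0
  -- h xbar is finite
  obtain ⟨y0, hy0K, hy0dom⟩ := hKdom
  have hnetop : h xbar ≠ ⊤ := by
    intro htop
    have h1 := hprox y0 hy0K
    rw [htop, EReal.top_add_coe, top_le_iff] at h1
    have hy0 : h y0 = (((h y0).toReal : ℝ) : EReal) :=
      (EReal.coe_toReal hy0dom (hproper_bot y0)).symm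
    rw [hy0, ← EReal.coe_add] at h1
    exact EReal.coe_ne_top _ h1
  set a := (h xbar).toReal with ha_def
  have ha : h xbar = (a : EReal) := (EReal.coe_toReal hnetop (hproper_bot xbar)).symm
  by_cases hxtop : h x = ⊤
  · rw [hxtop]
    rw [EReal.sub_top]; exact bot_le
  set b := (h x).toReal with hb_def
  have hb : h x = (b : EReal) := (EReal.coe_toReal hxtop (hproper_bot x)).symm
  have hgoal : ∀ r : ℝ, a - b ≤ r → h xbar - h x ≤ ((r : ℝ) : EReal) := by
    intro r hr
    rw [ha, hb, ← EReal.coe_sub]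
    exact_mod_cast hr
  set I : ℝ := ⟪xbar - z, x - xbar⟫ with hI_def
  rcases le_or_gt (h x) (h xbar) with hle | hlt
  · -- subdifferential case
    have hsub := hx0sub x
    simp only [indicatorE, if_pos hx, if_pos hxbarK, add_zero] at hsub
    have h2 := hsub hle
    have hinner : ⟪(1/2 : ℝ) • (z - xbar), x - xbar⟫ = -(1/2 * I) := by
      rw [real_inner_smul_left, hI_def]
      have : z - xbar = -(xbar - z) := by abel
      rw [this, inner_neg_left]; ring
    rw [hinner, ha, hb, ← EReal.coe_add, EReal.coe_le_coe_iff] at h2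
    exact hgoal _ (by linarith)
  · -- strong quasiconvexity case
    have hab : a < b := by
      rw [ha, hb] at hlt; exact_mod_cast hlt
    set l : ℝ := β / (1 + β) with hl_def
    have hβ0 : (0:ℝ) < 1 + β := by linarith
    have hl_pos : 0 < l := div_pos (by linarith) hβ0
    have hl_lt : l < 1 := (div_lt_one hβ0).mpr (by linarith)
    have hl_half : 1/2 ≤ l := by
      rw [hl_def, le_div_iff₀ hβ0]; linarith
    have hl_eq : l * (1 + β) = β := div_mul_cancel₀ β hβ0.ne'
    set xl : EuclideanSpace ℝ (Fin n) := l • x + (1 - l) • xbar with hxl_def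
    have hxlK : xl ∈ K := hKcv hx hxbarK hl_pos.le (by linarith) (by ring)
    have hqc := hsqc xbar ⟨hxbarK, hnetop⟩ x ⟨hx, hxtop⟩ l ⟨hl_pos.le, hl_lt.le⟩
    have hmax : max (h xbar) (h x) = ((b : ℝ) : EReal) := by
      rw [max_eq_right hlt.le, hb]
    rw [hmax, ← EReal.coe_sub] at hqc
    have hpx := hprox xl hxlK
    have hchain : h xbar + (((1/2 : ℝ) * ‖xbar - z‖ ^ 2 : ℝ) : EReal) ≤
        (((b - l * (1 - l) * (β/2) * ‖xbar - x‖ ^ 2 : ℝ) : EReal)) +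
        (((1/2 : ℝ) * ‖xl - z‖ ^ 2 : ℝ) : EReal) :=
      le_trans hpx (add_le_add_left hqc _)
    rw [ha, ← EReal.coe_add, ← EReal.coe_add, EReal.coe_le_coe_iff] at hchain
    -- key norm identity
    have hxlz : xl - z = (xbar - z) + l • (x - xbar) := by
      rw [hxl_def]
      module
    have hnorm : ‖xl - z‖ ^ 2 = ‖xbar - z‖ ^ 2 + 2 * (l * I) + l ^ 2 * ‖x - xbar‖ ^ 2 := by
      rw [hxlz, norm_add_sq_real, real_inner_smul_right, norm_smul, Real.norm_eq_abs,
        abs_of_pos hl_pos]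
      ring
    have hnrev : ‖xbar - x‖ = ‖x - xbar‖ := norm_sub_rev _ _
    rw [hnrev] at hchain
    set N : ℝ := ‖x - xbar‖ ^ 2 with hN_def
    have hkey : a - b ≤ l * I + (l ^ 2 / 2 - l * (1 - l) * (β / 2)) * N := by
      rw [hnorm] at hchain; nlinarith [hchain]
    have hcoef : l ^ 2 / 2 - l * (1 - l) * (β / 2) = 0 := by
      have h1 : l * (1 - l) * β = l ^ 2 := by
        have h2 : (1 - l) * (1 + β) = 1 := by
          linear_combination -hl_eq
        nlinarith [hl_eq, h2]
      linarith
    rw [hcoef, zero_mul, add_zero] at hkey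
    refine hgoal _ ?_
    rcases le_or_gt 0 I with hI | hI
    · have h4 : 0 ≤ 1/2 * I := by linarith
      linarith
    · have h3 : 0 ≤ (l - 1/2) * (-I) := mul_nonneg (by linarith) (by linarith)
      have h4 : (l - 1/2) * (-I) = 1/2 * I - l * I := by ring
      linarith
end
end

section
/- Let h : ℝⁿ → ℝ be strongly quasiconvex with modulus β > 0 on ℝⁿ, let x̄ ∈ ℝⁿ and α > 0. If ξ belongs to the convex subdifferential of (1/α)h at x̄, i.e. (1/α)h(y) ≥ (1/α)h(x̄) + ⟨ξ, y − x̄⟩ for all y ∈ ℝⁿ, then ⟨ξ, y − x̄⟩ ≤ −(β/(2α))‖y − x̄‖² for all y with h(y) ≤ h(x̄). -/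
open Set RealInnerProductSpace

/-- If `h : ℝⁿ → ℝ` is strongly quasiconvex with modulus `β > 0` and
`ξ` belongs to the convex subdifferential of `(1/α)h` at `x̄` (`α > 0`), then
`⟨ξ, y − x̄⟩ ≤ −(β/(2α))‖y − x̄‖²` for all `y` with `h(y) ≤ h(x̄)`. -/
theorem statement_12 {n : ℕ} (h : EuclideanSpace ℝ (Fin n) → ℝ)
    (β : ℝ) (hβ : 0 < β)
    (hsqc : ∀ x y : EuclideanSpace ℝ (Fin n), ∀ l ∈ Icc (0:ℝ) 1,
      h (l • y + (1 - l) • x) ≤ max (h x) (h y) - l * (1 - l) * (β/2) * ‖x - y‖ ^ 2)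
    (xbar : EuclideanSpace ℝ (Fin n)) (α : ℝ) (hα : 0 < α)
    (ξ : EuclideanSpace ℝ (Fin n))
    (hξ : ∀ y, (1/α) * h xbar + ⟪ξ, y - xbar⟫ ≤ (1/α) * h y) :
    ∀ y, h y ≤ h xbar → ⟪ξ, y - xbar⟫ ≤ -(β/(2*α)) * ‖y - xbar‖ ^ 2 := by
  intro y hy
  set b : ℝ := ⟪ξ, y - xbar⟫ with hb
  set N : ℝ := ‖y - xbar‖ ^ 2 with hN
  have hNnn : 0 ≤ N := by positivity
  have key : ∀ l : ℝ, 0 < l → l ≤ 1 → b ≤ -(1 - l) * (β/(2*α)) * N := by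
    intro l hl0 hl1
    have hmem : l ∈ Icc (0:ℝ) 1 := ⟨le_of_lt hl0, hl1⟩
    have h1 := hsqc xbar y l hmem
    have hmax : max (h xbar) (h y) = h xbar := max_eq_left hy
    have hnorm : ‖xbar - y‖ = ‖y - xbar‖ := norm_sub_rev _ _
    rw [hmax, hnorm] at h1
    have h2 := hξ (l • y + (1 - l) • xbar)
    have hz : (l • y + (1 - l) • xbar) - xbar = l • (y - xbar) := by
      rw [sub_smul, one_smul, smul_sub]; abel
    rw [hz, real_inner_smul_right] at h2
    have h3 : (1/α) * h xbar + l * b ≤ (1/α) * (h xbar - l * (1 - l) * (β/2) * N) := by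
      calc (1/α) * h xbar + l * b ≤ (1/α) * h (l • y + (1 - l) • xbar) := h2
        _ ≤ (1/α) * (h xbar - l * (1 - l) * (β/2) * N) := by
            apply mul_le_mul_of_nonneg_left h1 (by positivity)
    have h4 : l * b ≤ l * (-(1 - l) * (β/(2*α)) * N) := by
      have : (1/α) * (h xbar - l * (1 - l) * (β/2) * N)
          = (1/α) * h xbar + l * (-(1 - l) * (β/(2*α)) * N) := by
        field_simp; ring
      rw [this] at h3
      linarith
    exact le_of_mul_le_mul_left h4 hl0
  -- Now take l → 0: b ≤ -(β/(2α)) N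
  set c : ℝ := (β/(2*α)) * N with hc
  have hcnn : 0 ≤ c := by positivity
  have : b + c ≤ 0 := by
    by_contra hcon
    push_neg at hcon
    rcases eq_or_lt_of_le hcnn with hc0 | hc0
    · have := key 1 one_pos le_rfl
      simp at this
      have : b + c ≤ 0 := by rw [← hc0]; simpa using this
      linarith
    · set l : ℝ := min 1 ((b + c) / (2 * c)) with hl
      have hl0 : 0 < l := lt_min one_pos (by positivity)
      have hl1 : l ≤ 1 := min_le_left _ _
      have := key l hl0 hl1
      have hlc : l * c ≤ (b + c) / 2 := by
        have h5 : l ≤ (b + c) / (2 * c) := min_le_right _ _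
        calc l * c ≤ ((b + c) / (2 * c)) * c := by nlinarith
          _ = (b + c) / 2 := by field_simp
      have : b ≤ -c + l * c := by
        have : -(1 - l) * (β/(2*α)) * N = -c + l * c := by rw [hc]; ring
        linarith [key l hl0 hl1, this.ge.trans_eq rfl]
      linarith
  linarith [this]
end

section
/- Let h : ℝⁿ → ℝ be strongly quasiconvex with modulus β > 0 on ℝⁿ and x̄ ∈ ℝⁿ. If ξ ∈ ∂^≤ h(x̄) (the Gutiérrez subdifferential), then ⟨ξ, y − x̄⟩ ≤ −(β/2)‖y − x̄‖² for all y with h(y) ≤ h(x̄). -/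
open Set RealInnerProductSpace

/-- If `h : ℝⁿ → ℝ` is strongly quasiconvex with modulus `β > 0` and
`ξ ∈ ∂^≤ h(x̄)` (the Gutiérrez subdifferential), then
`⟨ξ, y − x̄⟩ ≤ −(β/2)‖y − x̄‖²` for all `y` with `h(y) ≤ h(x̄)`. -/
theorem statement_13 {n : ℕ} (h : EuclideanSpace ℝ (Fin n) → ℝ)
    (β : ℝ) (hβ : 0 < β)
    (hsqc : ∀ x y : EuclideanSpace ℝ (Fin n), ∀ l ∈ Icc (0:ℝ) 1,
      h (l • y + (1 - l) • x) ≤ max (h x) (h y) - l * (1 - l) * (β/2) * ‖x - y‖ ^ 2)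
    (xbar : EuclideanSpace ℝ (Fin n)) (ξ : EuclideanSpace ℝ (Fin n))
    (hξ : ∀ y, h y ≤ h xbar → h xbar + ⟪ξ, y - xbar⟫ ≤ h y) :
    ∀ y, h y ≤ h xbar → ⟪ξ, y - xbar⟫ ≤ -(β/2) * ‖y - xbar‖ ^ 2 := by
  intro y hy
  set K : ℝ := (β/2) * ‖y - xbar‖ ^ 2 with hK
  have hK0 : 0 ≤ K := by positivity
  -- key step inequality for each l ∈ (0,1]
  have key : ∀ l : ℝ, 0 < l → l ≤ 1 → ⟪ξ, y - xbar⟫ ≤ -(1 - l) * K := by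
    intro l hl0 hl1
    have hmem : l ∈ Icc (0:ℝ) 1 := ⟨le_of_lt hl0, hl1⟩
    have h1 := hsqc xbar y l hmem
    have hmax : max (h xbar) (h y) = h xbar := max_eq_left hy
    have hnorm : ‖xbar - y‖ = ‖y - xbar‖ := norm_sub_rev _ _
    rw [hmax, hnorm] at h1
    set z := l • y + (1 - l) • xbar with hz
    have hzle : h z ≤ h xbar := by
      have : 0 ≤ l * (1 - l) * (β/2) * ‖y - xbar‖ ^ 2 := by
        have : 0 ≤ 1 - l := by linarith
        positivity
      linarith
    have h2 := hξ z hzle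
    have hzsub : z - xbar = l • (y - xbar) := by
      rw [hz]
      module
    rw [hzsub, real_inner_smul_right] at h2
    -- h xbar + l * ⟪ξ, y - xbar⟫ ≤ h z ≤ h xbar - l*(1-l)*(β/2)*‖y-xbar‖^2
    have h3 : l * ⟪ξ, y - xbar⟫ ≤ -(l * (1 - l)) * K := by
      rw [hK]
      nlinarith [h1, h2]
    have := (mul_le_mul_iff_right₀ hl0).mp (by linarith [h3] : l * ⟪ξ, y - xbar⟫ ≤ l * (-(1 - l) * K))
    linarith [this]
  -- pass to the limit l → 0⁺ via ε-argument
  have : ⟪ξ, y - xbar⟫ ≤ -K := by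
    refine le_of_forall_pos_le_add ?_
    intro ε hε
    have hl0 : 0 < min 1 (ε / (K + 1)) := by
      apply lt_min one_pos
      positivity
    have hl1 : min 1 (ε / (K + 1)) ≤ 1 := min_le_left _ _
    have hkey := key _ hl0 hl1
    have : min 1 (ε / (K + 1)) * K ≤ ε := by
      have h1 : min 1 (ε / (K + 1)) ≤ ε / (K + 1) := min_le_right _ _
      have h2 : min 1 (ε / (K + 1)) * K ≤ (ε / (K + 1)) * K :=
        mul_le_mul_of_nonneg_right h1 hK0
      have h3 : (ε / (K + 1)) * K ≤ ε := by
        rw [div_mul_eq_mul_div, div_le_iff₀ (by linarith)]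
        nlinarith
      linarith
    nlinarith [hkey]
  linarith [this]
end

section
/- Let K be a closed convex set in ℝⁿ and h : ℝⁿ → ℝ ∪ {+∞} a proper lower semicontinuous function with K ∩ dom h ≠ ∅ that is prox-convex on K with prox-convex value α > 0, and suppose argmin_K h ≠ ∅. Let (x^k) be a sequence with x⁰ ∈ K and x^{k+1} ∈ prox_h(K, x^k) for all k ∈ ℕ. Then (x^k) is a minimizing sequence of h over K: h(x^k) → min_{x ∈ K} h(x) as k → +∞. -/
open Set Filter RealInnerProductSpace

noncomputable section

/-- Proximal point algorithm for prox-convex functions: if `h` is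
proper, lsc and prox-convex on the closed convex set `K` with `argmin_K h ∋ x*`, and
`x⁰ ∈ K`, `x^{k+1} ∈ prox_h(K, x^k)`, then `(x^k)` is a minimizing sequence:
`h(x^k) → min_K h = h(x*)`. -/
theorem statement_16 {n : ℕ} (K : Set (EuclideanSpace ℝ (Fin n)))
    (hKcl : IsClosed K) (hKcv : Convex ℝ K)
    (h : EuclideanSpace ℝ (Fin n) → EReal)
    (hproper_dom : ∃ x, h x ≠ ⊤) (hproper_bot : ∀ x, h x ≠ ⊥)
    (hlsc : LowerSemicontinuous h)
    (hKdom : (K ∩ {x | h x ≠ ⊤}).Nonempty)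
    (α : ℝ) (hα : 0 < α) (hpc : ProxConvexOn h K α)
    (xstar : EuclideanSpace ℝ (Fin n)) (hxstarK : xstar ∈ K)
    (hxstarmin : ∀ y ∈ K, h xstar ≤ h y)
    (x : ℕ → EuclideanSpace ℝ (Fin n)) (hx0 : x 0 ∈ K)
    (hiter : ∀ k : ℕ, x (k + 1) ∈ proxSet h K (x k)) :
    Filter.Tendsto (fun k => h (x k)) Filter.atTop (nhds (h xstar)) := by

  -- h xstar is finite
  obtain ⟨w, hwK, hwdom⟩ := hKdom
  have hstar_ne_top : h xstar ≠ ⊤ := fun htop => hwdom (top_le_iff.mp (htop ▸ hxstarmin w hwK))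
  set c : ℝ := (h xstar).toReal with hc
  have hstar_eq : h xstar = (c : EReal) := (EReal.coe_toReal hstar_ne_top (hproper_bot xstar)).symm
  -- all iterates are in K
  have hxK : ∀ k, x k ∈ K := by
    intro k
    cases k with
    | zero => exact hx0
    | succ m => exact (hiter m).1
  -- finiteness of h on iterates k ≥ 1 and the key real inequality
  set a : ℕ → ℝ := fun k => ‖x k - xstar‖ ^ 2 with ha
  have key : ∀ k : ℕ, h (x (k+1)) ≠ ⊤ ∧
      (h (x (k+1))).toReal - c ≤ (α/2) * (a k - a (k+1)) - (α/2) * ‖x (k+1) - x k‖^2 := by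
    intro k
    have hineq := (hpc (x k) (hxK k)).2 (x (k+1)) (hiter k) xstar hxstarK
    have hinner : α * ⟪x (k+1) - x k, xstar - x (k+1)⟫ =
        (α/2) * (a k - a (k+1)) - (α/2) * ‖x (k+1) - x k‖^2 := by
      have h2 : (2:ℝ) * ⟪x (k+1) - x k, xstar - x (k+1)⟫ =
          ‖x k - xstar‖^2 - ‖x (k+1) - xstar‖^2 - ‖x (k+1) - x k‖^2 := by
        simp only [norm_sub_sq_real, inner_sub_left, inner_sub_right,
          real_inner_self_eq_norm_sq, real_inner_comm (x k) xstar,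
          real_inner_comm (x k) (x (k+1)), real_inner_comm xstar (x (k+1))]
        ring
      simp only [ha]
      nlinarith [h2]
    have hne_top : h (x (k+1)) ≠ ⊤ := by
      intro htop
      rw [htop, hstar_eq, EReal.top_sub_coe] at hineq
      exact absurd hineq (not_le.mpr (EReal.coe_lt_top _))
    refine ⟨hne_top, ?_⟩
    have heq : h (x (k+1)) = (((h (x (k+1))).toReal : ℝ) : EReal) :=
      (EReal.coe_toReal hne_top (hproper_bot _)).symm
    rw [heq, hstar_eq, ← EReal.coe_sub, EReal.coe_le_coe_iff] at hineq
    linarith [hineq, hinner.le, hinner.ge]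
  have hnonneg : ∀ k : ℕ, 0 ≤ (h (x (k+1))).toReal - c := by
    intro k
    have := hxstarmin (x (k+1)) (hxK (k+1))
    rw [hstar_eq, (EReal.coe_toReal (key k).1 (hproper_bot _)).symm, EReal.coe_le_coe_iff] at this
    linarith
  -- a is antitone
  have ha_nonneg : ∀ k, 0 ≤ a k := fun k => sq_nonneg _
  have ha_anti : Antitone a := by
    refine antitone_nat_of_succ_le fun k => ?_
    have h1 := (key k).2
    have h2 := hnonneg k
    nlinarith [sq_nonneg ‖x (k+1) - x k‖]
  -- a converges, so a k - a (k+1) → 0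
  have hbdd : BddBelow (Set.range a) := ⟨0, fun y ⟨k, hk⟩ => hk ▸ ha_nonneg k⟩
  have ha_lim : Filter.Tendsto a Filter.atTop (nhds (⨅ k, a k)) :=
    tendsto_atTop_ciInf ha_anti hbdd
  have ha_shift : Filter.Tendsto (fun k => a (k+1)) Filter.atTop (nhds (⨅ k, a k)) :=
    ha_lim.comp (tendsto_add_atTop_nat 1)
  have hdiff : Filter.Tendsto (fun k => (α/2) * (a k - a (k+1))) Filter.atTop (nhds 0) := by
    have := (ha_lim.sub ha_shift).const_mul (α/2)
    simpa using this
  -- squeeze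
  have hsq : Filter.Tendsto (fun k => (h (x (k+1))).toReal - c) Filter.atTop (nhds 0) := by
    refine squeeze_zero hnonneg (fun k => ?_) hdiff
    have h1 := (key k).2
    nlinarith [sq_nonneg ‖x (k+1) - x k‖]
  have hb : Filter.Tendsto (fun k => (h (x (k+1))).toReal) Filter.atTop (nhds c) := by
    have := hsq.add_const c
    simpa using this
  have hbE : Filter.Tendsto (fun k => h (x (k+1))) Filter.atTop (nhds (h xstar)) := by
    rw [hstar_eq]
    have : Filter.Tendsto (fun k => (((h (x (k+1))).toReal : ℝ) : EReal)) Filter.atTop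
        (nhds ((c : ℝ) : EReal)) := by
      exact (continuous_coe_real_ereal.tendsto c).comp hb
    refine this.congr fun k => ?_
    exact EReal.coe_toReal (key k).1 (hproper_bot _)
  exact (Filter.tendsto_add_atTop_iff_nat 1).mp hbE
end
end

section
/- Let K be a closed set in ℝⁿ and h : ℝⁿ → ℝ ∪ {+∞} a proper function with K ∩ dom h ≠ ∅ that is prox-convex on K with prox-convex value α > 0, and let x* ∈ argmin_K h. If z ∈ K and x̄ ∈ prox_h(K, z), then ‖x̄ − x*‖² ≤ ‖z − x*‖² + (2/α)(h(x*) − h(x̄)) ≤ ‖z − x*‖². In particular, the proximal point iterates are Fejér monotone with respect to x*. -/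
/-!
Taking `x = x*` in the prox-convexity inequality bounds `h(x̄) - h(x*)` by `α⟪x̄ - z, x* - x̄⟫`,
and the three-point identity for `‖z - x*‖²` turns this into the first inequality; minimality
of `x*` gives the second. Both values of `h` are finite because `x̄` minimises
`h + ½‖· - z‖²` over `K`, which meets `dom h`, and `x*` minimises `h` over `K`.
-/

open Set Filter RealInnerProductSpace

noncomputable section

lemma norm_sub_sq_le_sub_of_le_mul_inner {E : Type*} [NormedAddCommGroup E]
    [InnerProductSpace ℝ E] {α c : ℝ} (hα : 0 < α) {z xbar x : E}
    (hc : c ≤ α * ⟪xbar - z, x - xbar⟫) :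
    ‖xbar - x‖ ^ 2 ≤ ‖z - x‖ ^ 2 - 2 / α * c := by
  have three_point : ‖z - x‖ ^ 2 = ‖z - xbar‖ ^ 2 + 2 * ⟪z - xbar, xbar - x⟫ + ‖xbar - x‖ ^ 2 := by
    rw [← norm_add_sq_real, sub_add_sub_cancel]
  have inner_flip : ⟪xbar - z, x - xbar⟫ = ⟪z - xbar, xbar - x⟫ := by
    rw [← inner_neg_neg, neg_sub, neg_sub]
  have hcα : 2 / α * c ≤ 2 * ⟪z - xbar, xbar - x⟫ := by
    rw [div_mul_eq_mul_div, div_le_iff₀ hα, ← inner_flip]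
    linarith
  nlinarith [sq_nonneg ‖z - xbar‖]

variable {n : ℕ} {h : EuclideanSpace ℝ (Fin n) → EReal} {K : Set (EuclideanSpace ℝ (Fin n))}

lemma ne_top_of_mem_proxSet {z xbar y : EuclideanSpace ℝ (Fin n)} (hxbar : xbar ∈ proxSet h K z)
    (hyK : y ∈ K) (hy : h y ≠ ⊤) : h xbar ≠ ⊤ := by
  intro htop
  have hle := hxbar.2 y hyK
  rw [htop, EReal.top_add_of_ne_bot (EReal.coe_ne_bot _), top_le_iff] at hle
  exact (EReal.add_lt_top hy (EReal.coe_ne_top _)).ne hle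

theorem ProxConvexOn.norm_sub_sq_le_of_mem_proxSet {α : ℝ} (hpc : ProxConvexOn h K α)
    (hα : 0 < α) (hbot : ∀ x, h x ≠ ⊥) (hKdom : (K ∩ {x | h x ≠ ⊤}).Nonempty)
    {xstar z xbar : EuclideanSpace ℝ (Fin n)} (hxstarK : xstar ∈ K)
    (hxstarmin : ∀ y ∈ K, h xstar ≤ h y) (hzK : z ∈ K) (hxbar : xbar ∈ proxSet h K z) :
    ((‖xbar - xstar‖ ^ 2 : ℝ) : EReal) ≤
        ((‖z - xstar‖ ^ 2 : ℝ) : EReal) + ((2/α : ℝ) : EReal) * (h xstar - h xbar) ∧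
      ((‖z - xstar‖ ^ 2 : ℝ) : EReal) + ((2/α : ℝ) : EReal) * (h xstar - h xbar) ≤
        ((‖z - xstar‖ ^ 2 : ℝ) : EReal) := by
  obtain ⟨y, hyK, hy⟩ := hKdom
  have hxbar_fin : h xbar ≠ ⊤ := ne_top_of_mem_proxSet hxbar hyK hy
  have hxstar_fin : h xstar ≠ ⊤ := ne_top_of_le_ne_top hy (hxstarmin y hyK)
  have hmin := hxstarmin xbar hxbar.1
  have hpcx := (hpc z hzK).2 xbar hxbar xstar hxstarK
  rw [← EReal.coe_toReal hxbar_fin (hbot xbar), ← EReal.coe_toReal hxstar_fin (hbot xstar)]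
    at hmin hpcx ⊢
  set a := (h xbar).toReal
  set b := (h xstar).toReal
  rw [EReal.coe_le_coe_iff] at hmin
  rw [← EReal.coe_sub, EReal.coe_le_coe_iff] at hpcx
  rw [← EReal.coe_sub, ← EReal.coe_mul, ← EReal.coe_add, EReal.coe_le_coe_iff,
    EReal.coe_le_coe_iff]
  have hdecrease : 2 / α * (b - a) ≤ 0 :=
    mul_nonpos_of_nonneg_of_nonpos (by positivity) (by linarith)
  constructor
  · linarith [norm_sub_sq_le_sub_of_le_mul_inner hα hpcx]
  · linarith

theorem ProxConvexOn.norm_sub_le_of_mem_proxSet {α : ℝ} (hpc : ProxConvexOn h K α)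
    (hα : 0 < α) (hbot : ∀ x, h x ≠ ⊥) (hKdom : (K ∩ {x | h x ≠ ⊤}).Nonempty)
    {xstar z xbar : EuclideanSpace ℝ (Fin n)} (hxstarK : xstar ∈ K)
    (hxstarmin : ∀ y ∈ K, h xstar ≤ h y) (hzK : z ∈ K) (hxbar : xbar ∈ proxSet h K z) :
    ‖xbar - xstar‖ ≤ ‖z - xstar‖ := by
  obtain ⟨h₁, h₂⟩ := hpc.norm_sub_sq_le_of_mem_proxSet hα hbot hKdom hxstarK hxstarmin hzK hxbar
  exact (pow_le_pow_iff_left₀ (norm_nonneg _) (norm_nonneg _) two_ne_zero).1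
    (EReal.coe_le_coe_iff.1 (h₁.trans h₂))

theorem statement_18_general {n : ℕ} (K : Set (EuclideanSpace ℝ (Fin n)))
    (h : EuclideanSpace ℝ (Fin n) → EReal)
    (hproper_bot : ∀ x, h x ≠ ⊥)
    (hKdom : (K ∩ {x | h x ≠ ⊤}).Nonempty)
    (α : ℝ) (hα : 0 < α) (hpc : ProxConvexOn h K α)
    (xstar : EuclideanSpace ℝ (Fin n)) (hxstarK : xstar ∈ K)
    (hxstarmin : ∀ y ∈ K, h xstar ≤ h y) :
    (∀ z ∈ K, ∀ xbar ∈ proxSet h K z,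
      ((‖xbar - xstar‖ ^ 2 : ℝ) : EReal) ≤
        ((‖z - xstar‖ ^ 2 : ℝ) : EReal) + ((2/α : ℝ) : EReal) * (h xstar - h xbar) ∧
      ((‖z - xstar‖ ^ 2 : ℝ) : EReal) + ((2/α : ℝ) : EReal) * (h xstar - h xbar) ≤
        ((‖z - xstar‖ ^ 2 : ℝ) : EReal)) ∧
    (∀ x : ℕ → EuclideanSpace ℝ (Fin n), x 0 ∈ K →
      (∀ k : ℕ, x (k + 1) ∈ proxSet h K (x k)) →
      ∀ k : ℕ, ‖x (k + 1) - xstar‖ ≤ ‖x k - xstar‖) := by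
  refine ⟨fun _ hzK _ hxbar =>
    hpc.norm_sub_sq_le_of_mem_proxSet hα hproper_bot hKdom hxstarK hxstarmin hzK hxbar,
    fun x hx0 hstep k => ?_⟩
  have hxK : x k ∈ K := by
    cases k with
    | zero => exact hx0
    | succ m => exact (hstep m).1
  exact hpc.norm_sub_le_of_mem_proxSet hα hproper_bot hKdom hxstarK hxstarmin hxK (hstep k)

/-- If `h` is proper and prox-convex on the closed set `K` with value
`α > 0`, `x* ∈ argmin_K h`, `z ∈ K` and `x̄ ∈ prox_h(K, z)`, then
`‖x̄ − x*‖² ≤ ‖z − x*‖² + (2/α)(h(x*) − h(x̄)) ≤ ‖z − x*‖²`; in particular the proximal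
point iterates are Fejér monotone with respect to `x*`. -/
theorem statement_18 {n : ℕ} (K : Set (EuclideanSpace ℝ (Fin n))) (hKcl : IsClosed K)
    (h : EuclideanSpace ℝ (Fin n) → EReal)
    (hproper_dom : ∃ x, h x ≠ ⊤) (hproper_bot : ∀ x, h x ≠ ⊥)
    (hKdom : (K ∩ {x | h x ≠ ⊤}).Nonempty)
    (α : ℝ) (hα : 0 < α) (hpc : ProxConvexOn h K α)
    (xstar : EuclideanSpace ℝ (Fin n)) (hxstarK : xstar ∈ K)
    (hxstarmin : ∀ y ∈ K, h xstar ≤ h y) :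
    (∀ z ∈ K, ∀ xbar ∈ proxSet h K z,
      ((‖xbar - xstar‖ ^ 2 : ℝ) : EReal) ≤
        ((‖z - xstar‖ ^ 2 : ℝ) : EReal) + ((2/α : ℝ) : EReal) * (h xstar - h xbar) ∧
      ((‖z - xstar‖ ^ 2 : ℝ) : EReal) + ((2/α : ℝ) : EReal) * (h xstar - h xbar) ≤
        ((‖z - xstar‖ ^ 2 : ℝ) : EReal)) ∧
    (∀ x : ℕ → EuclideanSpace ℝ (Fin n), x 0 ∈ K →
      (∀ k : ℕ, x (k + 1) ∈ proxSet h K (x k)) →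
      ∀ k : ℕ, ‖x (k + 1) - xstar‖ ≤ ‖x k - xstar‖) :=
  statement_18_general K h hproper_bot hKdom α hα hpc xstar hxstarK hxstarmin
end
end
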